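/- arXiv:2102.03720 — 3 statements merged into one kernel-verified Lean document; each statement's English description precedes it below -/
import Mathlib

section
/- Let H be a 3-uniform hypergraph with average degree at most d, where d ≥ 1. Then H contains an independent set of size at least 2·v(H)/(3·√d), where v(H) is the number of vertices of H. -/
theorem sum_w_one (p : ℝ) {V : Type*} [DecidableEq V] (s : Finset V) :
    ∑ t ∈ s.powerset, p ^ t.card * (1 - p) ^ (s.card - t.card) = 1 := by
  have h := Finset.prod_add (fun _ : V => p) (fun _ => 1 - p) s
  simp only [Finset.prod_const, add_sub_cancel, one_pow] at h
  have h2 : ∑ t ∈ s.powerset, p ^ t.card * (1 - p) ^ (s.card - t.card)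
      = ∑ t ∈ s.powerset, p ^ t.card * (1 - p) ^ (s \ t).card := by
    apply Finset.sum_congr rfl
    intro t ht
    rw [Finset.card_sdiff_of_subset (Finset.mem_powerset.mp ht)]
  rw [h2, ← h]

theorem disj_of_sub_compl {V : Type*} [Fintype V] [DecidableEq V] {A T : Finset V}
    (hT : T ⊆ Aᶜ) : Disjoint A T := by
  rw [Finset.disjoint_right]
  intro x hxT hxA
  exact (Finset.mem_compl.mp (hT hxT)) hxA

theorem sum_w_sup {V : Type*} [Fintype V] [DecidableEq V] (p : ℝ) (A : Finset V) :
    ∑ S ∈ Finset.univ.powerset.filter (fun S => A ⊆ S),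
      p ^ S.card * (1 - p) ^ (Fintype.card V - S.card) = p ^ A.card := by
  have key : ∑ S ∈ Finset.univ.powerset.filter (fun S => A ⊆ S),
      p ^ S.card * (1 - p) ^ (Fintype.card V - S.card)
      = ∑ T ∈ Aᶜ.powerset, p ^ (A ∪ T).card * (1 - p) ^ (Fintype.card V - (A ∪ T).card) := by
    apply Finset.sum_bij' (i := fun S _ => S \ A) (j := fun T _ => A ∪ T)
    · intro S hS
      simp only [Finset.mem_filter, Finset.mem_powerset] at hS
      simp only [Finset.mem_powerset]
      intro x hx
      simp only [Finset.mem_sdiff] at hx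
      simp [hx.2]
    · intro T hT
      simp [Finset.subset_univ]
    · intro S hS
      simp only [Finset.mem_filter, Finset.mem_powerset] at hS
      exact Finset.union_sdiff_of_subset hS.2
    · intro T hT
      simp only [Finset.mem_powerset] at hT
      exact Finset.union_sdiff_cancel_left (disj_of_sub_compl hT)
    · intro S hS
      simp only [Finset.mem_filter, Finset.mem_powerset] at hS
      rw [Finset.union_sdiff_of_subset hS.2]
  rw [key]
  have hsum : ∑ T ∈ Aᶜ.powerset, p ^ (A ∪ T).card * (1 - p) ^ (Fintype.card V - (A ∪ T).card)
      = p ^ A.card * ∑ T ∈ Aᶜ.powerset, p ^ T.card * (1 - p) ^ (Aᶜ.card - T.card) := by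
    rw [Finset.mul_sum]
    apply Finset.sum_congr rfl
    intro T hT
    simp only [Finset.mem_powerset] at hT
    rw [Finset.card_union_of_disjoint (disj_of_sub_compl hT), Finset.card_compl, pow_add,
      Nat.sub_sub]
    ring
  rw [hsum, sum_w_one, mul_one]

theorem del_lemma {V : Type*} [DecidableEq V] (H : Finset (Finset V))
    (hne : ∀ e ∈ H, e.Nonempty) :
    ∀ n : ℕ, ∀ S : Finset V, (H.filter (· ⊆ S)).card ≤ n →
      ∃ I : Finset V, I ⊆ S ∧ (∀ e ∈ H, ¬ e ⊆ I) ∧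
        S.card ≤ I.card + (H.filter (· ⊆ S)).card := by
  intro n
  induction n with
  | zero =>
    intro S hS
    have hemp : H.filter (· ⊆ S) = ∅ := Finset.card_eq_zero.mp (Nat.le_zero.mp hS)
    refine ⟨S, subset_rfl, ?_, by omega⟩
    intro e he hsub
    have : e ∈ H.filter (· ⊆ S) := Finset.mem_filter.mpr ⟨he, hsub⟩
    simp [hemp] at this
  | succ n ih =>
    intro S hS
    by_cases hemp : H.filter (· ⊆ S) = ∅
    · refine ⟨S, subset_rfl, ?_, by omega⟩
      intro e he hsub
      have : e ∈ H.filter (· ⊆ S) := Finset.mem_filter.mpr ⟨he, hsub⟩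
      simp [hemp] at this
    · obtain ⟨e, he⟩ := Finset.nonempty_iff_ne_empty.mpr hemp
      have heH : e ∈ H := (Finset.mem_filter.mp he).1
      have heS : e ⊆ S := (Finset.mem_filter.mp he).2
      obtain ⟨v, hv⟩ := hne e heH
      set S' := S.erase v with hS'
      have hsub : H.filter (· ⊆ S') ⊆ (H.filter (· ⊆ S)).erase e := by
        intro f hf
        have hfH : f ∈ H := (Finset.mem_filter.mp hf).1
        have hfS' : f ⊆ S' := (Finset.mem_filter.mp hf).2
        refine Finset.mem_erase.mpr ⟨?_, Finset.mem_filter.mpr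
          ⟨hfH, hfS'.trans (Finset.erase_subset _ _)⟩⟩
        intro hfe
        subst hfe
        exact (Finset.mem_erase.mp (hfS' hv)).1 rfl
      have hcard' : (H.filter (· ⊆ S')).card ≤ n := by
        have h1 := Finset.card_le_card hsub
        have h2 : ((H.filter (· ⊆ S)).erase e).card = (H.filter (· ⊆ S)).card - 1 :=
          Finset.card_erase_of_mem he
        have h3 : 1 ≤ (H.filter (· ⊆ S)).card := Finset.card_pos.mpr ⟨e, he⟩
        omega
      obtain ⟨I, hIS', hind, hI⟩ := ih S' hcard'
      refine ⟨I, hIS'.trans (Finset.erase_subset _ _), hind, ?_⟩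
      have hScard : S'.card = S.card - 1 := Finset.card_erase_of_mem (heS hv)
      have h1 : 1 ≤ S.card := Finset.card_pos.mpr ⟨v, heS hv⟩
      have hle : (H.filter (· ⊆ S')).card + 1 ≤ (H.filter (· ⊆ S)).card := by
        have h1 := Finset.card_le_card hsub
        have h2 : ((H.filter (· ⊆ S)).erase e).card = (H.filter (· ⊆ S)).card - 1 :=
          Finset.card_erase_of_mem he
        have h3 : 1 ≤ (H.filter (· ⊆ S)).card := Finset.card_pos.mpr ⟨e, he⟩
        omega
      omega

/-- A 3-uniform hypergraph with average degree at most `d` (`d ≥ 1`)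
contains an independent set of size at least `2 v(H) / (3 √d)`. -/
theorem stmt_0 {V : Type*} [Fintype V] [DecidableEq V]
    (H : Finset (Finset V)) (h3 : ∀ e ∈ H, e.card = 3)
    (d : ℝ) (hd : 1 ≤ d)
    (havg : (3 * H.card : ℝ) ≤ d * Fintype.card V) :
    ∃ I : Finset V, (∀ e ∈ H, ¬ e ⊆ I) ∧
      2 * (Fintype.card V : ℝ) / (3 * Real.sqrt d) ≤ I.card := by
  classical
  set n := Fintype.card V with hn
  set p : ℝ := (Real.sqrt d)⁻¹ with hp
  have hd0 : (0:ℝ) ≤ d := by linarith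
  have hs1 : 1 ≤ Real.sqrt d := by
    rw [show (1:ℝ) = Real.sqrt 1 by simp]
    exact Real.sqrt_le_sqrt hd
  have hs0 : 0 < Real.sqrt d := by linarith
  have hp0 : 0 < p := inv_pos.mpr hs0
  have hp1 : p ≤ 1 := by
    rw [hp]
    exact inv_le_one_of_one_le₀ hs1
  have h1p : 0 ≤ 1 - p := by linarith
  have hdp : d * p ^ 3 = p := by
    have hsq : Real.sqrt d ^ 2 = d := Real.sq_sqrt hd0
    have hdne : Real.sqrt d ≠ 0 := ne_of_gt hs0
    rw [hp]
    field_simp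
    nlinarith [hsq]
  set w : Finset V → ℝ := fun S => p ^ S.card * (1 - p) ^ (n - S.card) with hw
  have hw0 : ∀ S : Finset V, 0 ≤ w S := fun S =>
    mul_nonneg (pow_nonneg (le_of_lt hp0) _) (pow_nonneg h1p _)
  set P : Finset (Finset V) := Finset.univ.powerset with hP
  -- total weight is 1
  have hW : ∑ S ∈ P, w S = 1 := by
    have := sum_w_one p (Finset.univ : Finset V)
    rwa [Finset.card_univ] at this
  -- expected number of vertices
  have hSum1 : ∑ S ∈ P, w S * (S.card : ℝ) = n * p := by
    have h1 : ∀ S ∈ P, w S * (S.card : ℝ) = ∑ v ∈ Finset.univ, if v ∈ S then w S else 0 := by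
      intro S _
      rw [Finset.sum_ite_mem, Finset.univ_inter, Finset.sum_const, nsmul_eq_mul]
      ring
    rw [Finset.sum_congr rfl h1, Finset.sum_comm]
    have h2 : ∀ v : V, ∑ S ∈ P, (if v ∈ S then w S else 0) = p := by
      intro v
      rw [← Finset.sum_filter]
      have hfe : P.filter (fun S => v ∈ S) = P.filter (fun S => ({v} : Finset V) ⊆ S) := by
        apply Finset.filter_congr
        intro S _
        simp [Finset.singleton_subset_iff]
      rw [hfe]
      have := sum_w_sup p ({v} : Finset V)
      rw [this]
      simp
    rw [Finset.sum_congr rfl (fun v _ => h2 v), Finset.sum_const, Finset.card_univ,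
      nsmul_eq_mul]
  -- expected number of edges
  have hSum2 : ∑ S ∈ P, w S * ((H.filter (· ⊆ S)).card : ℝ) = H.card * p ^ 3 := by
    have h1 : ∀ S ∈ P, w S * ((H.filter (· ⊆ S)).card : ℝ)
        = ∑ e ∈ H, if e ⊆ S then w S else 0 := by
      intro S _
      rw [← Finset.sum_filter, Finset.sum_const, nsmul_eq_mul]
      ring
    rw [Finset.sum_congr rfl h1, Finset.sum_comm]
    have h2 : ∀ e ∈ H, ∑ S ∈ P, (if e ⊆ S then w S else 0) = p ^ 3 := by
      intro e he
      rw [← Finset.sum_filter]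
      have := sum_w_sup p e
      rw [this, h3 e he]
    rw [Finset.sum_congr rfl h2, Finset.sum_const, nsmul_eq_mul]
  -- the key expectation bound
  have hkey : 2 * (n : ℝ) / (3 * Real.sqrt d)
      ≤ ∑ S ∈ P, w S * ((S.card : ℝ) - ((H.filter (· ⊆ S)).card : ℝ)) := by
    have hsplit : ∑ S ∈ P, w S * ((S.card : ℝ) - ((H.filter (· ⊆ S)).card : ℝ))
        = (∑ S ∈ P, w S * (S.card : ℝ)) - ∑ S ∈ P, w S * ((H.filter (· ⊆ S)).card : ℝ) := by
      rw [← Finset.sum_sub_distrib]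
      apply Finset.sum_congr rfl
      intro S _
      ring
    rw [hsplit, hSum1, hSum2]
    have hm : (H.card : ℝ) * p ^ 3 ≤ (d * n / 3) * p ^ 3 := by
      apply mul_le_mul_of_nonneg_right _ (pow_nonneg (le_of_lt hp0) 3)
      linarith
    have heq : (n : ℝ) * p - (d * n / 3) * p ^ 3 = 2 * (n : ℝ) / (3 * Real.sqrt d) := by
      have h1 : (d * n / 3) * p ^ 3 = (n : ℝ) / 3 * (d * p ^ 3) := by ring
      rw [h1, hdp, hp]
      have hdne : Real.sqrt d ≠ 0 := ne_of_gt hs0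
      field_simp
      ring
    linarith
  -- pick a maximizing set
  have hPne : P.Nonempty := ⟨∅, by simp [hP]⟩
  obtain ⟨S₀, hS₀P, hmax⟩ := P.exists_max_image
    (fun S => (S.card : ℝ) - ((H.filter (· ⊆ S)).card : ℝ)) hPne
  have hbound : 2 * (n : ℝ) / (3 * Real.sqrt d)
      ≤ (S₀.card : ℝ) - ((H.filter (· ⊆ S₀)).card : ℝ) := by
    calc 2 * (n : ℝ) / (3 * Real.sqrt d)
        ≤ ∑ S ∈ P, w S * ((S.card : ℝ) - ((H.filter (· ⊆ S)).card : ℝ)) := hkey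
      _ ≤ ∑ S ∈ P, w S * ((S₀.card : ℝ) - ((H.filter (· ⊆ S₀)).card : ℝ)) :=
          Finset.sum_le_sum (fun S hS => mul_le_mul_of_nonneg_left (hmax S hS) (hw0 S))
      _ = (S₀.card : ℝ) - ((H.filter (· ⊆ S₀)).card : ℝ) := by
          rw [← Finset.sum_mul, hW, one_mul]
  -- delete one vertex per edge
  have hne : ∀ e ∈ H, e.Nonempty := by
    intro e he
    apply Finset.card_pos.mp
    rw [h3 e he]
    norm_num
  obtain ⟨I, hIS, hind, hcard⟩ :=
    del_lemma H hne ((H.filter (· ⊆ S₀)).card) S₀ le_rfl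
  refine ⟨I, hind, ?_⟩
  have hcast : (S₀.card : ℝ) ≤ (I.card : ℝ) + ((H.filter (· ⊆ S₀)).card : ℝ) := by
    exact_mod_cast hcard
  linarith
end

section
/- Let G be a graph, e an edge of G, and suppose G contains m distinct cycles of length 2k, each containing the edge e. Then the number of edges of G is at least m^(1/(k-1))/2. -/
set_option linter.unusedSectionVars false

open SimpleGraph

section aux
variable {V : Type*} [DecidableEq V] {G : SimpleGraph V}

lemma lemB {a c : V} {e : Sym2 V} :
    ∀ (p : G.Walk a c), p.support.Nodup → e ∈ p.edges → a ∈ e →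
    ∃ (d : V) (h : G.Adj a d) (t : G.Walk d c), p = Walk.cons h t ∧ e = s(a, d) := by
  intro p
  cases p with
  | nil => simp
  | cons h t =>
    intro hnd hee hae
    rw [Walk.edges_cons, List.mem_cons] at hee
    rcases hee with rfl | hee
    · exact ⟨_, h, t, rfl, rfl⟩
    · exfalso
      obtain ⟨x, rfl⟩ := Sym2.mem_iff_exists.mp hae
      have hmem : a ∈ t.support := t.fst_mem_support_of_mem_edges hee
      rw [Walk.support_cons, List.nodup_cons] at hnd
      exact hnd.1 hmem

lemma lemA {a : V} {e : Sym2 V}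
    (w : G.Walk a a) (hc : w.IsCycle) (hee : e ∈ w.edges) (hae : a ∈ e) :
    ∃ (b : V) (h : G.Adj a b) (p : G.Walk b a), e = s(a, b) ∧
      (Walk.cons h p).edges.toFinset = w.edges.toFinset ∧
      (Walk.cons h p).length = w.length := by
  cases w with
  | nil => simp at hee
  | cons h q =>
    rw [Walk.edges_cons, List.mem_cons] at hee
    rcases hee with rfl | hee
    · exact ⟨_, h, q, rfl, rfl, rfl⟩
    · have hnd : q.support.Nodup := by
        have := hc.support_nodup
        rwa [Walk.support_cons, List.tail_cons] at this
      have hnd' : q.reverse.support.Nodup := by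
        rw [Walk.support_reverse]; exact List.nodup_reverse.mpr hnd
      have hee' : e ∈ q.reverse.edges := by
        rw [Walk.edges_reverse, List.mem_reverse]; exact hee
      obtain ⟨d, hd, t, hqt, hed⟩ := lemB q.reverse hnd' hee' hae
      have hrw : Walk.cons hd (t.append (Walk.cons h.symm Walk.nil)) = (Walk.cons h q).reverse := by
        rw [Walk.reverse_cons, hqt, Walk.cons_append]
      refine ⟨d, hd, t.append (Walk.cons h.symm Walk.nil), hed, ?_, ?_⟩
      · rw [hrw, Walk.edges_reverse, List.toFinset_reverse]
      · rw [hrw, Walk.length_reverse]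

lemma edges_eq : ∀ {u v : V} (w : G.Walk u v),
    w.edges = (List.range w.length).map (fun j => s(w.getVert j, w.getVert (j+1))) := by
  intro u v w
  induction w with
  | nil => simp
  | @cons u x v h p ih =>
    rw [Walk.edges_cons, Walk.length_cons, List.range_succ_eq_map, List.map_cons, List.map_map]
    rw [ih]
    congr 1
    simp [Walk.getVert_cons_succ]
end aux

def vfn {V : Type*} (a b : V) (k : ℕ) (d : ℕ → V × V) (j : ℕ) : V :=
  if j = 0 then a else if j = 1 then b else if 2*k ≤ j then a
  else if j % 2 = 0 then (d (j/2 - 1)).1 else (d (j/2 - 1)).2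

def efun {V : Type*} [DecidableEq V] (a b : V) (k : ℕ) (d : ℕ → V × V) : Finset (Sym2 V) :=
  ((List.range (2*k)).map (fun j => s(vfn a b k d j, vfn a b k d (j+1)))).toFinset

/-- `C` is the edge set of a cycle of length `l` in `G`. -/
def IsCycleEdgeSet {V : Type*} [DecidableEq V] (G : SimpleGraph V) (l : ℕ)
    (C : Finset (Sym2 V)) : Prop :=
  ∃ (v : V) (w : G.Walk v v), w.IsCycle ∧ w.length = l ∧ w.edges.toFinset = C

/-- If a graph `G` contains `m` distinct cycles of length `2k`, each
containing a fixed edge `e`, then `G` has at least `m^(1/(k-1))/2` edges. -/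
theorem stmt_2 {V : Type*} [Fintype V] [DecidableEq V]
    (G : SimpleGraph V) [DecidableRel G.Adj]
    (k : ℕ) (hk : 2 ≤ k) (e : Sym2 V) (he : e ∈ G.edgeFinset)
    (m : ℕ) (𝒞 : Finset (Finset (Sym2 V))) (hcard : 𝒞.card = m)
    (hcyc : ∀ C ∈ 𝒞, IsCycleEdgeSet G (2 * k) C ∧ e ∈ C) :
    (m : ℝ) ^ ((1 : ℝ) / ((k : ℝ) - 1)) / 2 ≤ (G.edgeFinset.card : ℝ) := by
  classical
  revert he hcyc
  induction e using Sym2.inductionOn with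
  | _ a b =>
  intro he hcyc
  have hab : G.Adj a b := by rwa [SimpleGraph.mem_edgeFinset, SimpleGraph.mem_edgeSet] at he
  set F : (Fin (k-1) → G.Dart) → Finset (Sym2 V) :=
    fun g => efun a b k (fun i => if h : i < k-1 then (g ⟨i, h⟩).toProd else (a, a)) with hF
  have key : ∀ C ∈ 𝒞, ∃ g : Fin (k-1) → G.Dart, C = F g := by
    intro C hC
    obtain ⟨⟨v, w0, hc0, hl0, hE0⟩, heC⟩ := hcyc C hC
    have hew : s(a,b) ∈ w0.edges := by rw [← List.mem_toFinset, hE0]; exact heC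
    have haw : a ∈ w0.support := w0.fst_mem_support_of_mem_edges hew
    have hc1 : (w0.rotate a haw).IsCycle := hc0.rotate haw
    have hperm : (w0.rotate a haw).edges.Perm w0.edges := (w0.rotate_edges a haw).perm
    have he1 : s(a,b) ∈ (w0.rotate a haw).edges := hperm.mem_iff.mpr hew
    obtain ⟨b', hb', p, heq, hEs, hlen⟩ := lemA _ hc1 he1 (Sym2.mem_mk_left a b)
    have hbb : b = b' := Sym2.congr_right.mp heq
    subst hbb
    set w := Walk.cons hb' p with hw
    have hlen2 : w.length = 2*k := by
      rw [hlen]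
      have hl : (w0.rotate a haw).edges.length = w0.edges.length := hperm.length_eq
      rw [Walk.length_edges, Walk.length_edges] at hl
      rw [hl, hl0]
    have hCw : C = w.edges.toFinset := by
      rw [← hE0, hEs]
      exact List.toFinset_eq_of_perm _ _ hperm.symm
    have hadj : ∀ i : Fin (k-1), G.Adj (w.getVert (2*(i:ℕ)+2)) (w.getVert (2*(i:ℕ)+3)) := by
      intro i
      have hisl := i.isLt
      have h2 := w.adj_getVert_succ (i := 2*(i:ℕ)+2) (by rw [hlen2]; omega)
      have h3 : 2*(i:ℕ)+2+1 = 2*(i:ℕ)+3 := by omega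
      rwa [h3] at h2
    refine ⟨fun i => ⟨(w.getVert (2*(i:ℕ)+2), w.getVert (2*(i:ℕ)+3)), hadj i⟩, ?_⟩
    set d : ℕ → V × V :=
      fun i => if h : i < k-1 then ((w.getVert (2*i+2), w.getVert (2*i+3)) : V × V) else (a,a)
      with hd
    have hFg : F (fun i => ⟨(w.getVert (2*(i:ℕ)+2), w.getVert (2*(i:ℕ)+3)), hadj i⟩)
        = efun a b k d := rfl
    rw [hCw, hFg]
    have hvf : ∀ j ≤ 2*k, vfn a b k d j = w.getVert j := by
      intro j hj
      by_cases h0 : j = 0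
      · subst h0; simp [vfn, Walk.getVert_zero]
      by_cases h1 : j = 1
      · subst h1
        have hg1 : w.getVert 1 = b := by rw [hw, Walk.getVert_cons_succ]; exact p.getVert_zero
        simp [vfn, hg1]
      by_cases h2k : 2*k ≤ j
      · have hj2k : j = 2*k := le_antisymm hj h2k
        simp only [vfn, if_neg h0, if_neg h1, if_pos h2k]
        rw [hj2k, ← hlen2, Walk.getVert_length]
      rcases Nat.even_or_odd j with hev | hod
      · have h2 : j % 2 = 0 := Nat.even_iff.mp hev
        have hi : j/2 - 1 < k-1 := by omega
        have harith : 2*(j/2-1)+2 = j := by omega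
        simp only [vfn, if_neg h0, if_neg h1, if_neg h2k, if_pos h2, hd]
        rw [dif_pos hi, harith]
      · have h2 : j % 2 = 1 := Nat.odd_iff.mp hod
        have hi : j/2 - 1 < k-1 := by omega
        have harith : 2*(j/2-1)+3 = j := by omega
        simp only [vfn, if_neg h0, if_neg h1, if_neg h2k, if_neg (by omega : ¬ j % 2 = 0), hd]
        rw [dif_pos hi, harith]
    show w.edges.toFinset = efun a b k d
    rw [efun, edges_eq w, hlen2]
    congr 1
    apply List.map_congr_left
    intro j hj
    rw [List.mem_range] at hj
    rw [hvf j (le_of_lt hj), hvf (j+1) (by omega)]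
  set n := G.edgeFinset.card with hn
  have hm : m ≤ (2 * n)^(k-1) := by
    calc m = 𝒞.card := hcard.symm
    _ ≤ (Finset.univ.image F).card := Finset.card_le_card (by
        intro C hC
        obtain ⟨g, rfl⟩ := key C hC
        exact Finset.mem_image_of_mem F (Finset.mem_univ g))
    _ ≤ (Finset.univ : Finset (Fin (k-1) → G.Dart)).card := Finset.card_image_le
    _ = (Fintype.card G.Dart)^(k-1) := by
        rw [Finset.card_univ, Fintype.card_fun, Fintype.card_fin]
    _ = (2*n)^(k-1) := by rw [G.dart_card_eq_twice_card_edges]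
  have hk2 : (2:ℝ) ≤ (k:ℝ) := by exact_mod_cast hk
  have hc : ((k:ℝ) - 1) = ((k-1:ℕ):ℝ) := by
    have h1k : (1:ℕ) ≤ k := by omega
    push_cast [h1k]
    ring
  have hx0 : (0:ℝ) ≤ 2*(n:ℝ) := by positivity
  have hmx : (m:ℝ) ≤ (2*(n:ℝ)) ^ ((k-1:ℕ):ℝ) := by
    rw [Real.rpow_natCast]; exact_mod_cast hm
  have hexp : (0:ℝ) ≤ (1:ℝ)/((k:ℝ)-1) := by
    apply div_nonneg zero_le_one; linarith
  have h2 : (m:ℝ) ^ ((1:ℝ)/((k:ℝ)-1)) ≤ 2*(n:ℝ) := by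
    calc (m:ℝ) ^ ((1:ℝ)/((k:ℝ)-1))
        ≤ ((2*(n:ℝ)) ^ ((k-1:ℕ):ℝ)) ^ ((1:ℝ)/((k:ℝ)-1)) :=
          Real.rpow_le_rpow (Nat.cast_nonneg m) hmx hexp
      _ = (2*(n:ℝ)) ^ (((k-1:ℕ):ℝ) * ((1:ℝ)/((k:ℝ)-1))) := (Real.rpow_mul hx0 _ _).symm
      _ = (2*(n:ℝ)) ^ (1:ℝ) := by
          rw [← hc, mul_one_div, div_self (by linarith : ((k:ℝ)-1) ≠ 0)]
      _ = 2*(n:ℝ) := Real.rpow_one _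
  linarith
end

section
/- Let r ≥ 2 and let d ≥ m be positive integers. Let S_{d,m} be the r-uniform hypergraph on d vertices consisting of m vertex-disjoint stars, each on ⌊d/m⌋ or ⌈d/m⌉ vertices. Then the probability that a uniformly random s-element subset of the vertices of S_{d,m} is independent is at most exp(-m(s - rm)/(2d)). -/
open Finset

/-- Counting sets whose intersection pattern with a partition lies in prescribed families. -/
lemma star_fiber_card {V : Type*} [Fintype V] [DecidableEq V] {m : ℕ}
    (P : Fin m → Finset V)
    (hdisj : ∀ i j : Fin m, i ≠ j → Disjoint (P i) (P j))
    (hcover : ∀ x : V, ∃ i, x ∈ P i)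
    (s : ℕ) (g : Fin m → ℕ) (hg : ∑ i, g i = s)
    (S : Fin m → Finset (Finset V))
    (hS : ∀ i, ∀ T ∈ S i, T ⊆ P i ∧ T.card = g i) :
    ((Finset.powersetCard s (Finset.univ : Finset V)).filter
        (fun I => ∀ i, I ∩ P i ∈ S i)).card = ∏ i, (S i).card := by
  rw [← Fintype.card_piFinset]
  have hkey : ∀ h : Fin m → Finset V, (∀ i, h i ⊆ P i) →
      ∀ i, Finset.univ.biUnion h ∩ P i = h i := by
    intro h hsub i
    ext x
    simp only [Finset.mem_inter, Finset.mem_biUnion, Finset.mem_univ, true_and]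
    constructor
    · rintro ⟨⟨j, hxj⟩, hxi⟩
      rcases eq_or_ne j i with rfl | hji
      · exact hxj
      · exact absurd hxi (Finset.disjoint_left.mp (hdisj j i hji) (hsub j hxj))
    · intro hx
      exact ⟨⟨i, hx⟩, hsub i hx⟩
  refine Finset.card_nbij' (fun I i => I ∩ P i) (fun h => Finset.univ.biUnion h)
    ?_ ?_ ?_ ?_
  · intro I hI
    rw [Finset.mem_coe, Fintype.mem_piFinset]
    exact (Finset.mem_filter.mp (Finset.mem_coe.mp hI)).2
  · intro h hh
    rw [Finset.mem_coe, Fintype.mem_piFinset] at hh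
    have hsub : ∀ i, h i ⊆ P i := fun i => (hS i _ (hh i)).1
    refine Finset.mem_coe.mpr (Finset.mem_filter.mpr ⟨?_, ?_⟩)
    · rw [Finset.mem_powersetCard]
      refine ⟨Finset.subset_univ _, ?_⟩
      rw [Finset.card_biUnion (fun i _ j _ hij =>
        Finset.disjoint_of_subset_left (hsub i)
          (Finset.disjoint_of_subset_right (hsub j) (hdisj i j hij)))]
      rw [← hg]
      exact Finset.sum_congr rfl (fun i _ => (hS i _ (hh i)).2)
    · intro i
      rw [hkey h hsub i]
      exact hh i
  · intro I _
    ext x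
    simp only [Finset.mem_biUnion, Finset.mem_univ, Finset.mem_inter, true_and]
    constructor
    · rintro ⟨i, hxi, _⟩; exact hxi
    · intro hx
      obtain ⟨i, hi⟩ := hcover x
      exact ⟨i, hx, hi⟩
  · intro h hh
    rw [Finset.mem_coe, Fintype.mem_piFinset] at hh
    funext i
    exact hkey h (fun i => (hS i _ (hh i)).1) i

/-- Cast identity for the ratio of binomial coefficients. -/
lemma cast_choose_id (a k : ℕ) (ha : 1 ≤ a) :
    ((a - 1).choose k : ℝ) * (a : ℝ) = (a.choose k : ℝ) * ((a : ℝ) - (k : ℝ)) := by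
  rcases le_or_gt k a with hka | hka
  · obtain ⟨b, rfl⟩ : ∃ b, a = b + 1 := ⟨a - 1, by omega⟩
    have hid : (b + 1) * b.choose k = (b + 1).choose k * (b + 1 - k) := by
      calc (b + 1) * b.choose k = (b + 1).choose (k + 1) * (k + 1) :=
            Nat.add_one_mul_choose_eq b k
        _ = (b + 1).choose k * (b + 1 - k) := Nat.choose_succ_right_eq _ _
    have := congrArg (fun n : ℕ => (n : ℝ)) hid
    simp only [Nat.add_sub_cancel]
    push_cast [Nat.cast_sub hka] at this ⊢
    linarith
  · rw [Nat.choose_eq_zero_of_lt (by omega : a - 1 < k),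
      Nat.choose_eq_zero_of_lt hka]
    simp

/-- Per-star counting inequality. -/
lemma star_count_le {V : Type*} [DecidableEq V] (r k m d : ℕ) (Q : Finset V) (c0 : V)
    (hc : c0 ∈ Q) (hd : 1 ≤ d) (h2d : m * Q.card ≤ 2 * d) :
    (((Q.powersetCard k).filter (fun T => r ≤ k → c0 ∉ T)).card : ℝ) ≤
      Real.exp (-((m : ℝ)/(2*(d:ℝ))) * (if r ≤ k then (k:ℝ) else 0)) *
        ((Q.powersetCard k).card : ℝ) := by
  have hdR : (0:ℝ) < (d:ℝ) := by exact_mod_cast hd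
  by_cases hrg : r ≤ k
  · have hSAeq : (Q.powersetCard k).filter (fun T => r ≤ k → c0 ∉ T)
        = (Q.erase c0).powersetCard k := by
      ext T
      simp only [Finset.mem_filter, Finset.mem_powersetCard, Finset.subset_erase,
        hrg, true_implies]
      tauto
    have ha : 1 ≤ Q.card := Finset.card_pos.mpr ⟨c0, hc⟩
    rw [hSAeq, Finset.card_powersetCard, Finset.card_powersetCard,
      Finset.card_erase_of_mem hc, if_pos hrg]
    set a : ℕ := Q.card with haa
    set E : ℝ := Real.exp (-((m : ℝ)/(2*(d:ℝ))) * (k:ℝ)) with hE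
    have haR : (0:ℝ) < (a:ℝ) := by exact_mod_cast ha
    have hmaR : (m : ℝ) * (a:ℝ) ≤ 2 * (d:ℝ) := by exact_mod_cast h2d
    have hratio : ((a:ℝ) - (k:ℝ)) / (a:ℝ) ≤ E := by
      have e2 : 1 - (k:ℝ)/(a:ℝ) ≤ Real.exp (-((k:ℝ)/(a:ℝ))) := by
        have := Real.add_one_le_exp (-((k:ℝ)/(a:ℝ)))
        linarith
      have e3 : Real.exp (-((k:ℝ)/(a:ℝ))) ≤ E := by
        rw [hE]
        apply Real.exp_le_exp.mpr
        have h1 : (m:ℝ)/(2*(d:ℝ)) * (k:ℝ) ≤ (k:ℝ)/(a:ℝ) := by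
          rw [div_mul_eq_mul_div, div_le_div_iff₀ (by linarith) haR]
          have hkR : (0:ℝ) ≤ (k:ℝ) := Nat.cast_nonneg k
          nlinarith
        linarith
      have e1 : ((a:ℝ) - (k:ℝ)) / (a:ℝ) = 1 - (k:ℝ)/(a:ℝ) := by
        field_simp
      rw [e1]
      linarith
    have hr2 : (a:ℝ) - (k:ℝ) ≤ E * (a:ℝ) := by
      rw [div_le_iff₀ haR] at hratio
      exact hratio
    have h3 : ((a - 1).choose k : ℝ) * (a:ℝ) ≤ (E * (a.choose k : ℝ)) * (a:ℝ) := by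
      rw [cast_choose_id a k ha]
      calc (a.choose k : ℝ) * ((a:ℝ) - (k:ℝ))
          ≤ (a.choose k : ℝ) * (E * (a:ℝ)) :=
            mul_le_mul_of_nonneg_left hr2 (Nat.cast_nonneg _)
        _ = (E * (a.choose k : ℝ)) * (a:ℝ) := by ring
    exact le_of_mul_le_mul_right h3 haR
  · rw [Finset.filter_true_of_mem (fun T _ hri => absurd hri hrg), if_neg hrg]
    simp

set_option maxHeartbeats 1000000 in
/-- Let `S_{d,m}` be the `r`-uniform hypergraph on `d` vertices
consisting of `m` vertex-disjoint stars, each on `⌊d/m⌋` or `⌈d/m⌉` vertices.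
The probability that a uniformly random `s`-subset of its vertices is independent
is at most `exp(-m(s - rm)/(2d))`. -/
theorem stmt_7 {V : Type*} [Fintype V] [DecidableEq V]
    (r m d s : ℕ) (hr : 2 ≤ r) (hm : 1 ≤ m) (hdm : m ≤ d) (hsd : s ≤ d)
    (hV : Fintype.card V = d)
    (P : Fin m → Finset V) (center : Fin m → V)
    (hdisj : ∀ i j : Fin m, i ≠ j → Disjoint (P i) (P j))
    (hcover : ∀ x : V, ∃ i : Fin m, x ∈ P i)
    (hsize : ∀ i : Fin m, (P i).card = d / m ∨ (P i).card = (d + m - 1) / m)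
    (hcen : ∀ i : Fin m, center i ∈ P i)
    (H : Finset (Finset V))
    (hH : ∀ e : Finset V, e ∈ H ↔ ∃ i : Fin m, e ⊆ P i ∧ e.card = r ∧ center i ∈ e) :
    (((Finset.powersetCard s (Finset.univ : Finset V)).filter
        (fun I : Finset V => ∀ e ∈ H, ¬ e ⊆ I)).card : ℝ) / (d.choose s : ℝ) ≤
      Real.exp (-((m : ℝ) * ((s : ℝ) - (r : ℝ) * (m : ℝ))) / (2 * (d : ℝ))) := by
  have hd : 1 ≤ d := le_trans hm hdm
  have hdR : (0:ℝ) < (d:ℝ) := by exact_mod_cast hd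
  set c : ℝ := Real.exp (-((m : ℝ) * ((s : ℝ) - (r : ℝ) * (m : ℝ))) / (2 * (d : ℝ)))
    with hc
  -- independence characterization
  have indep_iff : ∀ I : Finset V,
      (∀ e ∈ H, ¬ e ⊆ I) ↔ ∀ i, r ≤ (I ∩ P i).card → center i ∉ I := by
    intro I
    constructor
    · intro h i hcard hcI
      have hc' : center i ∈ I ∩ P i := Finset.mem_inter.mpr ⟨hcI, hcen i⟩
      obtain ⟨t, ht, htc⟩ := Finset.exists_subset_card_eq
        (n := r - 1) (s := (I ∩ P i).erase (center i))
        (by rw [Finset.card_erase_of_mem hc']; omega)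
      have hct : center i ∉ t := fun hx => (Finset.mem_erase.mp (ht hx)).1 rfl
      have hec : (insert (center i) t).card = r := by
        rw [Finset.card_insert_of_notMem hct, htc]; omega
      have htI : t ⊆ I ∩ P i := ht.trans (Finset.erase_subset _ _)
      have heI : insert (center i) t ⊆ I := by
        intro x hx
        rcases Finset.mem_insert.mp hx with rfl | h1
        · exact hcI
        · exact (Finset.mem_inter.mp (htI h1)).1
      have heH : insert (center i) t ∈ H := (hH _).mpr
        ⟨i, Finset.insert_subset (hcen i)
            (fun x hx => (Finset.mem_inter.mp (htI hx)).2),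
          hec, Finset.mem_insert_self _ _⟩
      exact h _ heH heI
    · intro h e heH heI
      obtain ⟨i, hePi, her, hece⟩ := (hH e).mp heH
      have hcard : r ≤ (I ∩ P i).card := by
        rw [← her]
        exact Finset.card_le_card (fun x hx => Finset.mem_inter.mpr ⟨heI hx, hePi hx⟩)
      exact h i hcard (heI hece)
  -- sum of intersection cards
  have hsum_inter : ∀ I : Finset V, ∑ i, (I ∩ P i).card = I.card := by
    intro I
    have hbu : Finset.univ.biUnion (fun i => I ∩ P i) = I := by
      ext x
      simp only [Finset.mem_biUnion, Finset.mem_univ, Finset.mem_inter, true_and]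
      constructor
      · rintro ⟨i, hxi, _⟩; exact hxi
      · intro hx
        obtain ⟨i, hi⟩ := hcover x
        exact ⟨i, hx, hi⟩
    have hcb := Finset.card_biUnion (s := (Finset.univ : Finset (Fin m)))
      (t := fun i => I ∩ P i) (fun i _ j _ hij =>
      Finset.disjoint_of_subset_left Finset.inter_subset_right
        (Finset.disjoint_of_subset_right Finset.inter_subset_right (hdisj i j hij)))
    rw [hbu] at hcb
    exact hcb.symm
  -- size bound for each part
  have h2d : ∀ i : Fin m, m * (P i).card ≤ 2 * d := by
    intro i
    have h1 : (P i).card ≤ (d + m - 1) / m := by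
      rcases hsize i with h | h
      · rw [h]; exact Nat.div_le_div_right (by omega)
      · rw [h]
    calc m * (P i).card ≤ m * ((d + m - 1) / m) := Nat.mul_le_mul_left m h1
      _ ≤ d + m - 1 := Nat.mul_div_le _ _
      _ ≤ 2 * d := by omega
  set T : Finset (Finset V) := Finset.powersetCard s (Finset.univ : Finset V) with hT
  set A : Finset (Finset V) := T.filter (fun I : Finset V => ∀ e ∈ H, ¬ e ⊆ I) with hA
  set F : Finset (Fin m → ℕ) := Fintype.piFinset (fun _ : Fin m => Finset.range (s+1))
    with hF
  have hmapT : ∀ I ∈ T, (fun i => (I ∩ P i).card) ∈ F := by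
    intro I hI
    rw [hF, Fintype.mem_piFinset]
    intro i
    rw [Finset.mem_range]
    have h1 : (I ∩ P i).card ≤ I.card := Finset.card_le_card Finset.inter_subset_left
    have h2 : I.card = s := (Finset.mem_powersetCard.mp hI).2
    omega
  have hmapA : ∀ I ∈ A, (fun i => (I ∩ P i).card) ∈ F :=
    fun I hI => hmapT I (Finset.mem_filter.mp hI).1
  have hAcard := Finset.card_eq_sum_card_fiberwise hmapA
  have hTcard := Finset.card_eq_sum_card_fiberwise hmapT
  -- per fiber inequality
  have keyg : ∀ g ∈ F,
      ((A.filter (fun I => (fun i => (I ∩ P i).card) = g)).card : ℝ) ≤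
        c * ((T.filter (fun I => (fun i => (I ∩ P i).card) = g)).card : ℝ) := by
    intro g _
    by_cases hgs : ∑ i, g i = s
    · have eA : A.filter (fun I => (fun i => (I ∩ P i).card) = g)
          = T.filter (fun I => ∀ i, I ∩ P i ∈
            ((P i).powersetCard (g i)).filter (fun Tt => r ≤ g i → center i ∉ Tt)) := by
        rw [hA, Finset.filter_filter]
        apply Finset.filter_congr
        intro I _
        simp only [Finset.mem_filter, Finset.mem_powersetCard, funext_iff]
        constructor
        · rintro ⟨hind, hcards⟩ i
          refine ⟨⟨Finset.inter_subset_right, hcards i⟩, ?_⟩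
          intro hri hcmem
          exact ((indep_iff I).mp hind i (by rw [hcards i]; exact hri))
            (Finset.mem_inter.mp hcmem).1
        · intro h
          have hcards : ∀ i, (I ∩ P i).card = g i := fun i => (h i).1.2
          refine ⟨(indep_iff I).mpr ?_, hcards⟩
          intro i hri hcI
          exact (h i).2 ((hcards i) ▸ hri) (Finset.mem_inter.mpr ⟨hcI, hcen i⟩)
      have eB : T.filter (fun I => (fun i => (I ∩ P i).card) = g)
          = T.filter (fun I => ∀ i, I ∩ P i ∈ (P i).powersetCard (g i)) := by
        apply Finset.filter_congr
        intro I _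
        simp only [Finset.mem_powersetCard, funext_iff]
        constructor
        · intro h i; exact ⟨Finset.inter_subset_right, h i⟩
        · intro h i; exact (h i).2
      have cA := star_fiber_card P hdisj hcover s g hgs
        (fun i => ((P i).powersetCard (g i)).filter (fun Tt => r ≤ g i → center i ∉ Tt))
        (fun i Tt hTt => Finset.mem_powersetCard.mp (Finset.mem_filter.mp hTt).1)
      have cB := star_fiber_card P hdisj hcover s g hgs
        (fun i => (P i).powersetCard (g i))
        (fun i Tt hTt => Finset.mem_powersetCard.mp hTt)
      rw [eA, eB, hT, cA, cB, Nat.cast_prod, Nat.cast_prod]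
      -- product inequality
      calc ∏ i, ((((P i).powersetCard (g i)).filter
              (fun Tt => r ≤ g i → center i ∉ Tt)).card : ℝ)
          ≤ ∏ i, (Real.exp (-((m : ℝ)/(2*(d:ℝ))) * (if r ≤ g i then (g i :ℝ) else 0)) *
              (((P i).powersetCard (g i)).card : ℝ)) :=
            Finset.prod_le_prod (fun i _ => Nat.cast_nonneg _)
              (fun i _ => star_count_le r (g i) m d (P i) (center i)
                (hcen i) hd (h2d i))
        _ = Real.exp (-((m : ℝ)/(2*(d:ℝ))) *
              ∑ i, (if r ≤ g i then (g i :ℝ) else 0)) *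
              ∏ i, (((P i).powersetCard (g i)).card : ℝ) := by
            rw [Finset.prod_mul_distrib, ← Real.exp_sum, ← Finset.mul_sum]
        _ ≤ c * ∏ i, (((P i).powersetCard (g i)).card : ℝ) := by
            apply mul_le_mul_of_nonneg_right _
              (Finset.prod_nonneg (fun i _ => Nat.cast_nonneg _))
            rw [hc]
            apply Real.exp_le_exp.mpr
            have hts : (s:ℝ) - (r:ℝ) * (m:ℝ) ≤ ∑ i, (if r ≤ g i then (g i :ℝ) else 0) := by
              have hpt : ∀ i : Fin m, (g i : ℝ) - (r:ℝ) ≤ (if r ≤ g i then (g i :ℝ) else 0) := by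
                intro i
                by_cases hrg : r ≤ g i
                · simp only [if_pos hrg]
                  have : (0:ℝ) ≤ (r:ℝ) := Nat.cast_nonneg r
                  linarith
                · simp only [if_neg hrg]
                  have : (g i : ℝ) ≤ (r:ℝ) := by
                    exact_mod_cast Nat.le_of_lt (Nat.lt_of_not_le hrg)
                  linarith
              have hsum := Finset.sum_le_sum
                (fun i (_ : i ∈ (Finset.univ : Finset (Fin m))) => hpt i)
              have e1 : ∑ i : Fin m, ((g i : ℝ) - (r:ℝ)) = (s:ℝ) - (r:ℝ) * (m:ℝ) := by
                rw [Finset.sum_sub_distrib]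
                have e0 : ∑ i : Fin m, (g i : ℝ) = (s : ℝ) := by
                  exact_mod_cast congrArg (fun n : ℕ => (n:ℝ)) hgs
                rw [e0, Finset.sum_const, Finset.card_univ, Fintype.card_fin]
                ring
              linarith [e1 ▸ hsum]
            have hcoef : (0:ℝ) ≤ (m:ℝ)/(2*(d:ℝ)) := by positivity
            have hmul := mul_le_mul_of_nonneg_left hts hcoef
            have e2 : -((m:ℝ) * ((s:ℝ) - (r:ℝ) * (m:ℝ))) / (2 * (d:ℝ))
                = -(((m:ℝ)/(2*(d:ℝ))) * ((s:ℝ) - (r:ℝ) * (m:ℝ))) := by ring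
            rw [e2]
            linarith
    · have hempty : A.filter (fun I => (fun i => (I ∩ P i).card) = g) = ∅ := by
        rw [Finset.filter_eq_empty_iff]
        intro I hI heq
        have hIT : I ∈ T := (Finset.mem_filter.mp hI).1
        have hIs : I.card = s := (Finset.mem_powersetCard.mp hIT).2
        apply hgs
        calc ∑ i, g i = ∑ i, (I ∩ P i).card :=
              Finset.sum_congr rfl (fun i _ => (congrFun heq i).symm)
          _ = I.card := hsum_inter I
          _ = s := hIs
      rw [hempty]
      simp only [Finset.card_empty, Nat.cast_zero]
      positivity
  -- assemble
  have hTcount : T.card = d.choose s := by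
    rw [hT, Finset.card_powersetCard, Finset.card_univ, hV]
  have hchoose : (0:ℝ) < (d.choose s : ℝ) := by
    exact_mod_cast Nat.choose_pos hsd
  rw [div_le_iff₀ hchoose]
  calc (A.card : ℝ)
      = ∑ g ∈ F, ((A.filter (fun I => (fun i => (I ∩ P i).card) = g)).card : ℝ) := by
        rw [hAcard]; push_cast; ring
    _ ≤ ∑ g ∈ F, c * ((T.filter (fun I => (fun i => (I ∩ P i).card) = g)).card : ℝ) :=
        Finset.sum_le_sum keyg
    _ = c * ∑ g ∈ F, ((T.filter (fun I => (fun i => (I ∩ P i).card) = g)).card : ℝ) := by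
        rw [Finset.mul_sum]
    _ = c * (T.card : ℝ) := by rw [hTcard]; push_cast; ring
    _ = c * (d.choose s : ℝ) := by rw [hTcount]
end
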